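/- arXiv:1709.05801 — 3 statements merged into one kernel-verified Lean document; each statement's English description precedes it below -/
import Mathlib

section
/- Let ℓ ≥ 2, δ ≥ 3, k ≥ 1 be integers, and let α be a rational with 0 ≤ α ≤ 1 such that ℓ - (ℓ-1)α > 0. Then ⌈ ⌈k / (ℓ - (ℓ-1)α)⌉ · (δ - α) ⌉ ≥ ⌈k/ℓ⌉·δ - [ℓ divides k-1], where [·] is the 0/1 indicator. -/
set_option maxHeartbeats 1000000 in
theorem stmt_4 (ℓ δ k : ℤ) (hℓ : 2 ≤ ℓ) (hδ : 3 ≤ δ) (hk : 1 ≤ k)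
    (α : ℚ) (hα0 : 0 ≤ α) (hα1 : α ≤ 1) (hpos : 0 < (ℓ : ℚ) - ((ℓ : ℚ) - 1) * α) :
    ⌈((⌈(k : ℚ) / ((ℓ : ℚ) - ((ℓ : ℚ) - 1) * α)⌉ : ℚ) * ((δ : ℚ) - α) : ℚ)⌉ ≥
      ⌈(k : ℚ) / ℓ⌉ * δ - (if ℓ ∣ (k - 1) then 1 else 0) := by
  obtain ⟨D, hD⟩ : ∃ D : ℚ, D = (ℓ : ℚ) - ((ℓ : ℚ) - 1) * α := ⟨_, rfl⟩
  rw [← hD] at hpos ⊢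
  obtain ⟨m, hm⟩ : ∃ m : ℤ, m = ⌈(k : ℚ) / D⌉ := ⟨_, rfl⟩
  obtain ⟨c, hcdef⟩ : ∃ c : ℤ, c = ⌈(k : ℚ) / ℓ⌉ := ⟨_, rfl⟩
  rw [← hm, ← hcdef]
  have hℓQ : (2:ℚ) ≤ (ℓ:ℚ) := by exact_mod_cast hℓ
  have hℓ1 : (0:ℚ) < (ℓ:ℚ) - 1 := by linarith
  have hℓ0 : (0:ℚ) < (ℓ:ℚ) := by linarith
  have hkQ : (1:ℚ) ≤ (k:ℚ) := by exact_mod_cast hk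
  have hδQ : (3:ℚ) ≤ (δ:ℚ) := by exact_mod_cast hδ
  have hmD : (k:ℚ) ≤ m * D := by
    have h1 : (k:ℚ)/D ≤ (m:ℚ) := hm ▸ Int.le_ceil _
    have h3 := mul_le_mul_of_nonneg_right h1 (le_of_lt hpos)
    rwa [div_mul_cancel₀ _ (ne_of_gt hpos)] at h3
  have hDle : D ≤ (ℓ:ℚ) := by rw [hD]; nlinarith
  have hcm : c ≤ m := by
    rw [hm, hcdef]
    exact Int.ceil_le_ceil (div_le_div_of_nonneg_left (by linarith) hpos hDle)
  have hck1 : (k:ℚ)/ℓ ≤ (c:ℚ) := hcdef ▸ Int.le_ceil _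
  have hck2 : (c:ℚ) < (k:ℚ)/ℓ + 1 := hcdef ▸ Int.ceil_lt_add_one _
  have hr0 : k ≤ c * ℓ := by
    have h4 : (k:ℚ) ≤ (c:ℚ) * ℓ := by
      have := (div_le_iff₀ hℓ0).mp hck1
      linarith
    exact_mod_cast h4
  have hr1 : c * ℓ - k ≤ ℓ - 1 := by
    have h5 : (c:ℚ) - 1 < (k:ℚ)/ℓ := by linarith
    have h6 : ((c:ℚ) - 1) * ℓ < (k:ℚ) := (lt_div_iff₀ hℓ0).mp h5
    have h7 : (c:ℚ) * ℓ < (k:ℚ) + ℓ := by nlinarith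
    have h8 : c * ℓ < k + ℓ := by exact_mod_cast h7
    omega
  have hkey : (m:ℚ) * ((ℓ:ℚ) - 1) * α ≤ (m:ℚ) * ℓ - k := by
    rw [hD] at hmD; nlinarith
  have hcmQ : (c:ℚ) ≤ (m:ℚ) := by exact_mod_cast hcm
  have hmain : (m:ℚ) * ((δ:ℚ) - α) * ((ℓ:ℚ) - 1) ≥
      (c:ℚ) * δ * ((ℓ:ℚ) - 1) - ((c:ℚ) * ℓ - k) := by
    nlinarith [mul_nonneg (by linarith : (0:ℚ) ≤ (m:ℚ) - c)
      (by nlinarith : (0:ℚ) ≤ (δ:ℚ) * ((ℓ:ℚ) - 1) - ℓ)]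
  by_cases hdvd : ℓ ∣ (k - 1)
  · simp only [hdvd, if_pos]
    have hrQ : (c:ℚ) * ℓ - k ≤ (ℓ:ℚ) - 1 := by
      have : ((c * ℓ - k : ℤ) : ℚ) ≤ ((ℓ - 1 : ℤ) : ℚ) := by exact_mod_cast hr1
      push_cast at this; linarith
    have hx : ((c * δ - 1 : ℤ) : ℚ) ≤ (m:ℚ) * ((δ:ℚ) - α) := by
      push_cast
      nlinarith
    have h9 := hx.trans (Int.le_ceil _)
    have h10 : c * δ - 1 ≤ ⌈(m:ℚ) * ((δ:ℚ) - α)⌉ := by exact_mod_cast h9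
    omega
  · simp only [hdvd, if_neg, not_false_iff]
    have hne : c * ℓ - k ≠ ℓ - 1 := by
      intro h
      exact hdvd ⟨c - 1, by linarith⟩
    have hr2 : c * ℓ - k ≤ ℓ - 2 := by omega
    have hrQ : (c:ℚ) * ℓ - k ≤ (ℓ:ℚ) - 2 := by
      have : ((c * ℓ - k : ℤ) : ℚ) ≤ ((ℓ - 2 : ℤ) : ℚ) := by exact_mod_cast hr2
      push_cast at this; linarith
    have hx : ((c * δ - 1 : ℤ) : ℚ) < (m:ℚ) * ((δ:ℚ) - α) := by
      push_cast
      nlinarith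
    have h11 := Int.lt_ceil.mpr hx
    omega
end

section
/- Let n, k, δ, ℓ be integers with ℓ ≥ 2, δ ≥ 3, k ≥ 2, and k ≠ ℓ + 1. Then n - k + 1 - (⌈k/ℓ⌉ - 1)·δ + [ℓ | (k-1)] ≤ n - k + 1 + δ - ⌈(k/ℓ)·δ⌉, where [·] is the 0/1 indicator and the ceiling on the right is of the rational k·δ/ℓ. -/
theorem stmt_14 (n k δ ℓ : ℤ) (hℓ : 2 ≤ ℓ) (hδ : 3 ≤ δ) (hk : 2 ≤ k) (hne : k ≠ ℓ + 1) :
    n - k + 1 - (⌈(k : ℚ) / ℓ⌉ - 1) * δ + (if ℓ ∣ (k - 1) then 1 else 0) ≤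
      n - k + 1 + δ - ⌈((k : ℚ) / ℓ) * δ⌉ := by
  have hℓ0 : (0:ℚ) < (ℓ:ℚ) := by exact_mod_cast (by linarith : (0:ℤ) < ℓ)
  have hδ0 : (0:ℚ) < (δ:ℚ) := by exact_mod_cast (by linarith : (0:ℤ) < δ)
  by_cases hdvd : ℓ ∣ (k - 1)
  · obtain ⟨m, hm⟩ := hdvd
    have hk1 : (k:ℚ) = m * ℓ + 1 := by
      have : k = ℓ * m + 1 := by linarith
      push_cast [this]; ring
    have e1 : (k:ℚ) / ℓ = 1 / ℓ + (m:ℚ) := by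
      rw [hk1]; field_simp; ring
    have e2 : (k:ℚ) / ℓ * δ = (δ:ℚ) / ℓ + ((m*δ : ℤ) : ℚ) := by
      rw [hk1]; push_cast; field_simp; ring
    have c1 : ⌈(k:ℚ)/ℓ⌉ = m + 1 := by
      rw [e1, Int.ceil_add_intCast]
      have : ⌈(1:ℚ)/ℓ⌉ = 1 := by
        rw [Int.ceil_eq_iff]
        constructor
        · norm_num
          positivity
        · push_cast
          rw [div_le_one hℓ0]
          exact_mod_cast (by linarith : (1:ℤ) ≤ ℓ)
      omega
    have c2 : ⌈(k:ℚ)/ℓ * δ⌉ = ⌈(δ:ℚ)/ℓ⌉ + m*δ := by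
      rw [e2, Int.ceil_add_intCast]
    have c3 : ⌈(δ:ℚ)/ℓ⌉ ≤ δ - 1 := by
      apply Int.ceil_le.mpr
      rw [div_le_iff₀ hℓ0]
      have : (δ:ℤ) ≤ (δ - 1) * ℓ := by nlinarith
      exact_mod_cast this
    simp only [if_pos (show ℓ ∣ k - 1 from ⟨m, hm⟩), c1, c2]
    linarith
  · simp only [if_neg hdvd]
    have c4 : ⌈(k:ℚ)/ℓ * δ⌉ ≤ ⌈(k:ℚ)/ℓ⌉ * δ := by
      apply Int.ceil_le.mpr
      push_cast
      have h1 : (k:ℚ)/ℓ ≤ (⌈(k:ℚ)/ℓ⌉ : ℚ) := Int.le_ceil _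
      nlinarith
    linarith
end

section
/- Let ℓ ≥ 2, δ ≥ 3, k ≥ 1 be integers. Then ⌈ ⌈k/ℓ⌉·(δ - ℓ/(ℓ-1)) + k/(ℓ-1) ⌉ = ⌈k/ℓ⌉·δ - [ℓ | (k-1)]. -/
theorem stmt_16 (ℓ δ k : ℤ) (hℓ : 2 ≤ ℓ) (hδ : 3 ≤ δ) (hk : 1 ≤ k) :
    ⌈((⌈(k : ℚ) / ℓ⌉ : ℚ) * ((δ : ℚ) - (ℓ : ℚ) / (ℓ - 1)) + (k : ℚ) / (ℓ - 1) : ℚ)⌉ =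
      ⌈(k : ℚ) / ℓ⌉ * δ - (if ℓ ∣ (k - 1) then 1 else 0) := by
  have hℓQ : (1:ℚ) < (ℓ:ℚ) := by exact_mod_cast lt_of_lt_of_le one_lt_two hℓ
  have hℓ0 : (0:ℚ) < (ℓ:ℚ) := by linarith
  have hℓ1 : (0:ℚ) < (ℓ:ℚ) - 1 := by linarith
  set m : ℤ := ⌈(k:ℚ)/ℓ⌉ with hm
  have h1 : (k:ℚ) ≤ (m:ℚ) * ℓ := by
    have h := Int.le_ceil ((k:ℚ)/ℓ)
    rw [← hm, div_le_iff₀ hℓ0] at h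
    linarith
  have h2 : (m:ℚ) * ℓ < (k:ℚ) + ℓ := by
    have h := Int.ceil_lt_add_one ((k:ℚ)/ℓ)
    rw [← hm] at h
    have h' := (lt_div_iff₀ hℓ0).mp (by linarith : (m:ℚ) - 1 < (k:ℚ)/ℓ)
    nlinarith [h']
  have h1' : k ≤ m * ℓ := by
    have : ((k:ℤ):ℚ) ≤ ((m * ℓ : ℤ):ℚ) := by push_cast; linarith
    exact_mod_cast this
  have h2' : m * ℓ ≤ k + ℓ - 1 := by
    have : ((m * ℓ : ℤ):ℚ) < ((k + ℓ : ℤ):ℚ) := by push_cast; linarith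
    have := Int.cast_lt.mp this
    omega
  have key : ((m:ℚ) * ((δ : ℚ) - (ℓ : ℚ) / (ℓ - 1)) + (k : ℚ) / (ℓ - 1) : ℚ)
      = (m:ℚ) * δ - ((m*ℓ - k : ℤ) : ℚ) / (ℓ - 1) := by
    push_cast
    field_simp
    ring
  rw [key]
  by_cases hdvd : ℓ ∣ (k - 1)
  · obtain ⟨c, hc⟩ := hdvd
    have hmc : m = c + 1 := by
      have hle : m ≤ c + 1 := by
        have hml : m * ℓ ≤ (c + 1) * ℓ := by nlinarith
        exact le_of_mul_le_mul_right hml (by omega)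
      have hge : c + 1 ≤ m := by nlinarith
      omega
    have hr : m * ℓ - k = ℓ - 1 := by rw [hmc]; linear_combination -hc
    rw [hr]
    have heq : (m:ℚ) * δ - ((ℓ - 1 : ℤ):ℚ)/((ℓ:ℚ) - 1) = ((m * δ - 1 : ℤ) : ℚ) := by
      push_cast
      field_simp
    rw [heq, Int.ceil_intCast]
    simp [hc]
  · have hr2 : m * ℓ - k ≤ ℓ - 2 := by
      rcases lt_or_eq_of_le h2' with h | h
      · omega
      · exfalso
        apply hdvd
        exact ⟨m - 1, by linarith [h]⟩
    have hr0 : 0 ≤ m * ℓ - k := by omega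
    simp only [hdvd, if_false]
    rw [Int.ceil_eq_iff]
    have hcast2 : ((m*ℓ - k : ℤ) : ℚ) ≤ (ℓ:ℚ) - 2 := by exact_mod_cast hr2
    have hcast0 : (0:ℚ) ≤ ((m*ℓ - k : ℤ) : ℚ) := by exact_mod_cast hr0
    have hdlt : ((m*ℓ - k : ℤ) : ℚ) / ((ℓ:ℚ) - 1) < 1 := by
      rw [div_lt_one hℓ1]; linarith
    have hdge : (0:ℚ) ≤ ((m*ℓ - k : ℤ) : ℚ) / ((ℓ:ℚ) - 1) :=
      div_nonneg hcast0 (le_of_lt hℓ1)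
    constructor
    · push_cast at hdlt ⊢
      linarith
    · push_cast at hdge ⊢
      linarith
end
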